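/- arXiv:2304.02864 — 2 statements merged into one kernel-verified Lean document; each statement's English description precedes it below -/
import Mathlib

section
/- Assume the girth of X = J(v,k,i) equals 4. Then the odd girth of X equals 2⌈(k − i)/Δ⌉ + 1; that is, X contains an odd cycle of length 2⌈(k − i)/Δ⌉ + 1 and contains no shorter odd cycle. -/
/-- The generalized Johnson graph `J(v,k,i)`: vertices are the `k`-element subsets of a
`v`-element set, two vertices adjacent iff their intersection has exactly `i` elements. -/
def genJohnsonGraph (v k i : ℕ) :
    SimpleGraph {A : Finset (Fin v) // A.card = k} where
  Adj A B := A ≠ B ∧ (A.1 ∩ B.1).card = i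
  symm := by
    constructor
    rintro A B ⟨hne, hcard⟩
    exact ⟨hne.symm, by rwa [Finset.inter_comm]⟩
  loopless := by constructor; rintro A ⟨hne, -⟩; exact hne rfl

/-!
Write `Δ = v - 2k + 2i`. Along a path `A - B - C` with `|A ∩ B| = i`, inclusion-exclusion gives
`|A ∩ C| + |B ∩ C| ≤ k + i` and `3k ≤ |A ∩ B| + |A ∩ C| + |B ∩ C| + v`. Hence after `2j` steps
from `A` the current vertex meets `A` in at least `k - jΔ` points, and after `2j + 1` steps in at
most `i + jΔ`; a closed walk of length `2j + 1` therefore forces `k - i ≤ jΔ`.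

Conversely, if `2i > k` three `k`-sets can pairwise meet in `i` points, giving a triangle, so girth
`4` forces `2i ≤ k`. Then two steps suffice to raise the intersection with a target vertex by `Δ`,
and going out along one edge and coming back in this way gives a closed walk of length
`2⌈(k - i)/Δ⌉ + 1`. It contains an odd cycle, which by the first part has exactly this length.
-/

open Finset

namespace Finset

variable {α : Type*} [DecidableEq α]

theorem card_inter_add_card_inter_le (A B C : Finset α) :
    #(A ∩ C) + #(B ∩ C) ≤ #C + #(A ∩ B) := by
  rw [← card_union_add_card_inter]
  exact add_le_add (card_le_card (union_subset inter_subset_right inter_subset_right))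
    (card_le_card (inter_subset_inter inter_subset_left inter_subset_left))

variable [Fintype α]

theorem card_add_card_add_card_le (A B C : Finset α) :
    #A + #B + #C ≤ #(A ∩ B) + #(A ∩ C) + #(B ∩ C) + Fintype.card α := by
  have hAB := card_union_add_card_inter A B
  have hABC := card_union_add_card_inter (A ∪ B) C
  have hcover : #((A ∪ B) ∩ C) ≤ #(A ∩ C) + #(B ∩ C) :=
    union_inter_distrib_right A B C ▸ card_union_le _ _
  have huniv := card_le_univ (A ∪ B ∪ C)
  omega

theorem exists_card_inter_eq_of_le_venn {C E : Finset α} {a b c d : ℕ}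
    (ha : a ≤ #(C ∩ E)) (hb : b ≤ #(C \ E)) (hc : c ≤ #(E \ C)) (hd : d ≤ #(C ∪ E)ᶜ) :
    ∃ D : Finset α, #D = a + b + c + d ∧ #(C ∩ D) = a + b ∧ #(E ∩ D) = a + c := by
  obtain ⟨S₁, hS₁, rfl⟩ := exists_subset_card_eq ha
  obtain ⟨S₂, hS₂, rfl⟩ := exists_subset_card_eq hb
  obtain ⟨S₃, hS₃, rfl⟩ := exists_subset_card_eq hc
  obtain ⟨S₄, hS₄, rfl⟩ := exists_subset_card_eq hd
  simp only [subset_iff, mem_inter, mem_sdiff, mem_compl, mem_union, not_or] at hS₁ hS₂ hS₃ hS₄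
  have h₁₂ : Disjoint S₁ S₂ := disjoint_left.2 fun x h₁ h₂ ↦ (hS₂ h₂).2 (hS₁ h₁).2
  have h₁₃ : Disjoint S₁ S₃ := disjoint_left.2 fun x h₁ h₃ ↦ (hS₃ h₃).2 (hS₁ h₁).1
  have h₂₃ : Disjoint S₂ S₃ := disjoint_left.2 fun x h₂ h₃ ↦ (hS₃ h₃).2 (hS₂ h₂).1
  have h₁₂₃₄ : Disjoint (S₁ ∪ S₂ ∪ S₃) S₄ := by
    refine disjoint_left.2 fun x h h₄ ↦ (hS₄ h₄).1 ?_
    rcases mem_union.1 h with h | h₃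
    · rcases mem_union.1 h with h₁ | h₂
      exacts [(hS₁ h₁).1, (hS₂ h₂).1]
    · exact absurd (hS₃ h₃).1 (hS₄ h₄).2
  refine ⟨S₁ ∪ S₂ ∪ S₃ ∪ S₄, ?_, ?_, ?_⟩
  · rw [card_union_of_disjoint h₁₂₃₄, card_union_of_disjoint (disjoint_union_left.2 ⟨h₁₃, h₂₃⟩),
      card_union_of_disjoint h₁₂]
  · have : C ∩ (S₁ ∪ S₂ ∪ S₃ ∪ S₄) = S₁ ∪ S₂ := by
      ext x
      have := @hS₁ x; have := @hS₂ x; have := @hS₃ x; have := @hS₄ x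
      simp only [mem_inter, mem_union]
      tauto
    rw [this, card_union_of_disjoint h₁₂]
  · have : E ∩ (S₁ ∪ S₂ ∪ S₃ ∪ S₄) = S₁ ∪ S₃ := by
      ext x
      have := @hS₁ x; have := @hS₂ x; have := @hS₃ x; have := @hS₄ x
      simp only [mem_inter, mem_union]
      tauto
    rw [this, card_union_of_disjoint h₁₃]

theorem exists_card_inter_eq_card_inter_eq {k i : ℕ} {C E : Finset α} (hC : #C = k)
    (hE : #E = k) (hik : i ≤ k) (h2k : 2 * k ≤ Fintype.card α)
    (h3k : 3 * k ≤ Fintype.card α + 2 * i + #(C ∩ E)) (h2i : 2 * i ≤ k + #(C ∩ E)) :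
    ∃ D : Finset α, #D = k ∧ #(C ∩ D) = i ∧ #(E ∩ D) = i := by
  set γ := #(C ∩ E)
  have hγ : γ ≤ k := hC ▸ card_le_card inter_subset_left
  have hCE : #(C \ E) = k - γ := by rw [card_sdiff, inter_comm, hC]
  have hEC : #(E \ C) = k - γ := by rw [card_sdiff, hE]
  have hout : #(C ∪ E)ᶜ = Fintype.card α + γ - 2 * k := by
    have := card_union_add_card_inter C E
    rw [card_compl]
    omega
  -- the least admissible number of points of `D` in `C ∩ E`
  set p := max (i + γ - k) (2 * i - k)
  obtain ⟨D, hD, hCD, hED⟩ := exists_card_inter_eq_of_le_venn (C := C) (E := E)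
    (a := p) (b := i - p) (c := i - p) (d := k + p - 2 * i) (by omega) (by omega) (by omega)
    (by omega)
  exact ⟨D, by omega, by omega, by omega⟩

end Finset

namespace SimpleGraph

variable {V : Type*} {G : SimpleGraph V}

namespace Walk

theorem exists_eq_append_append_of_not_isPath [DecidableEq V] {u v : V} (p : G.Walk u v)
    (hp : ¬p.IsPath) :
    ∃ (x : V) (p₁ : G.Walk u x) (c : G.Walk x x) (p₂ : G.Walk x v),
      ¬c.Nil ∧ p = p₁.append (c.append p₂) := by
  induction p with
  | nil => exact absurd IsPath.nil hp
  | @cons u y v h q ih =>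
    by_cases hu : u ∈ q.support
    · refine ⟨u, nil, cons h (q.takeUntil u hu), q.dropUntil u hu, not_nil_cons, ?_⟩
      rw [nil_append, cons_append, take_spec]
    · have hq : ¬q.IsPath := fun hq ↦ hp ((cons_isPath_iff h q).2 ⟨hq, hu⟩)
      obtain ⟨x, p₁, c, p₂, hc, rfl⟩ := ih hq
      exact ⟨x, cons h p₁, c, p₂, hc, rfl⟩

/-- Split at a repeated vertex into two shorter closed walks; one of them has odd length. -/
theorem exists_isCycle_odd_length_le [DecidableEq V] {u : V} (w : G.Walk u u)
    (hw : Odd w.length) :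
    ∃ (x : V) (c : G.Walk x x), c.IsCycle ∧ Odd c.length ∧ c.length ≤ w.length := by
  induction hn : w.length using Nat.strong_induction_on generalizing u w with
  | _ n ih =>
  subst hn
  cases w with
  | nil => simp at hw
  | @cons _ y _ h p =>
    by_cases hp : p.IsPath
    · have he : s(u, y) ∉ p.edges := fun he ↦ by
        have := hp.length_eq_one_of_mem_edges (Sym2.eq_swap ▸ he)
        simp [this, Nat.odd_iff] at hw
      exact ⟨u, cons h p, (cons_isCycle_iff p h).2 ⟨hp, he⟩, hw, le_rfl⟩
    · obtain ⟨x, p₁, c, p₂, hc, rfl⟩ := exists_eq_append_append_of_not_isPath p hp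
      set w' := cons h (p₁.append p₂)
      have hlen : (cons h (p₁.append (c.append p₂))).length = c.length + w'.length := by
        simp only [w', length_cons, length_append]; ring
      have hc₀ : 0 < c.length := not_nil_iff_lt_length.1 hc
      have hw'₀ : 0 < w'.length := by simp [w']
      rw [hlen] at hw ih ⊢
      have shorter {z : V} (d : G.Walk z z) (hd : Odd d.length)
          (hlt : d.length < c.length + w'.length) :
          ∃ (x : V) (e : G.Walk x x), e.IsCycle ∧ Odd e.length ∧
            e.length ≤ c.length + w'.length :=
        let ⟨x, e, he, heo, hel⟩ := ih _ hlt d hd rfl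
        ⟨x, e, he, heo, hel.trans hlt.le⟩
      rcases Nat.even_or_odd c.length with hce | hco
      · exact shorter w' ((Nat.odd_add'.1 hw).2 hce) (by omega)
      · exact shorter c hco (by omega)

end Walk

theorem girth_le_three_of_adj {a b c : V} (hab : G.Adj a b) (hac : G.Adj a c) (hbc : G.Adj b c) :
    G.girth ≤ 3 := by
  classical
  obtain ⟨u, w, hw, hlen⟩ :=
    is3Clique_iff_exists_cycle_length_three.1 ⟨_, is3Clique_triple_iff.2 ⟨hab, hac, hbc⟩⟩
  exact hlen ▸ girth_le_length hw

end SimpleGraph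

section Johnson

variable {v k i Δ : ℕ}

theorem genJohnsonGraph_adj_of_card_inter_eq (hik : i < k)
    {A B : {A : Finset (Fin v) // A.card = k}} (h : #(A.1 ∩ B.1) = i) :
    (genJohnsonGraph v k i).Adj A B :=
  ⟨by rintro rfl; rw [inter_self, A.2] at h; omega, h⟩

theorem genJohnsonGraph_exists_adj_adj (hik : i < k) (h2k : 2 * k ≤ v)
    {A B : {A : Finset (Fin v) // A.card = k}}
    (h3k : 3 * k ≤ v + 2 * i + #(A.1 ∩ B.1)) (h2i : 2 * i ≤ k + #(A.1 ∩ B.1)) :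
    ∃ D, (genJohnsonGraph v k i).Adj A D ∧ (genJohnsonGraph v k i).Adj B D := by
  obtain ⟨D, hD, hAD, hBD⟩ := exists_card_inter_eq_card_inter_eq A.2 B.2 hik.le
    (by rwa [Fintype.card_fin]) (by rwa [Fintype.card_fin]) h2i
  exact ⟨⟨D, hD⟩, genJohnsonGraph_adj_of_card_inter_eq hik hAD,
    genJohnsonGraph_adj_of_card_inter_eq hik hBD⟩

theorem genJohnsonGraph_exists_adj (hik : i < k) (h2k : 2 * k ≤ v) :
    ∃ A B, (genJohnsonGraph v k i).Adj A B := by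
  obtain ⟨A, -, hA⟩ := exists_subset_card_eq (s := (univ : Finset (Fin v))) (n := k)
    (by rw [card_univ, Fintype.card_fin]; omega)
  obtain ⟨B, hAB, -⟩ := genJohnsonGraph_exists_adj_adj (A := ⟨A, hA⟩) (B := ⟨A, hA⟩) hik h2k
    (by simp only [inter_self, hA]; omega) (by simp only [inter_self, hA]; omega)
  exact ⟨_, B, hAB⟩

theorem genJohnsonGraph_girth_le_three (hik : i < k) (h2k : 2 * k ≤ v) (hki : k < 2 * i) :
    (genJohnsonGraph v k i).girth ≤ 3 := by
  obtain ⟨A, B, hAB⟩ := genJohnsonGraph_exists_adj hik h2k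
  obtain ⟨C, hAC, hBC⟩ := genJohnsonGraph_exists_adj_adj hik h2k
    (by rw [hAB.2]; omega) (by rw [hAB.2]; omega)
  exact SimpleGraph.girth_le_three_of_adj hAB hAC hBC

/-- `C` keeps `A ∩ A'` and trades up to `Δ` points of `A \ A'` for points of `A' \ A`; then
`B` is a common neighbour of `A` and `C`. -/
theorem genJohnsonGraph_exists_adj_adj_le_card_inter (hik : i < k) (h2i : 2 * i ≤ k)
    (h2k : 2 * k ≤ v) (hΔ : v + 2 * i = 2 * k + Δ) (A A' : {A : Finset (Fin v) // A.card = k}) :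
    ∃ B C, (genJohnsonGraph v k i).Adj A B ∧ (genJohnsonGraph v k i).Adj B C ∧
      min (#(A.1 ∩ A'.1) + Δ) k ≤ #(C.1 ∩ A'.1) := by
  set γ := #(A.1 ∩ A'.1)
  set e := min (γ + Δ) k
  have hγ : γ ≤ k := A.2 ▸ card_le_card inter_subset_left
  obtain ⟨C, hC, hAC, hA'C⟩ := exists_card_inter_eq_of_le_venn (C := A.1) (E := A'.1)
    (a := γ) (b := k - e) (c := e - γ) (d := 0) le_rfl
    (by rw [card_sdiff, inter_comm, A.2]; omega) (by rw [card_sdiff, A'.2]; omega) (Nat.zero_le _)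
  obtain ⟨B, hAB, hCB⟩ := genJohnsonGraph_exists_adj_adj (A := A) (B := ⟨C, by omega⟩) hik h2k
    (by rw [hAC]; omega) (by omega)
  exact ⟨B, ⟨C, by omega⟩, hAB, hCB.symm, by rw [inter_comm, hA'C]; omega⟩

theorem genJohnsonGraph_exists_walk_length_eq (hik : i < k) (h2i : 2 * i ≤ k) (h2k : 2 * k ≤ v)
    (hΔ : v + 2 * i = 2 * k + Δ) (j : ℕ) (A A' : {A : Finset (Fin v) // A.card = k})
    (h : k ≤ #(A.1 ∩ A'.1) + j * Δ) :
    ∃ w : (genJohnsonGraph v k i).Walk A A', w.length = 2 * j := by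
  induction j generalizing A with
  | zero =>
    have hAA' : A.1 ∩ A'.1 = A.1 :=
      eq_of_subset_of_card_le inter_subset_left (by rw [A.2]; omega)
    obtain rfl : A = A' :=
      Subtype.ext (eq_of_subset_of_card_le (inter_eq_left.1 hAA') (by rw [A.2, A'.2]))
    exact ⟨.nil, rfl⟩
  | succ j ih =>
    obtain ⟨B, C, hAB, hBC, hC⟩ :=
      genJohnsonGraph_exists_adj_adj_le_card_inter hik h2i h2k hΔ A A'
    rw [Nat.succ_mul] at h
    obtain ⟨w, hw⟩ := ih C (by omega)
    exact ⟨.cons hAB (.cons hBC w), by simp [hw]; ring⟩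

theorem genJohnsonGraph_exists_closed_walk_length_eq (hik : i < k) (h2i : 2 * i ≤ k)
    (h2k : 2 * k ≤ v) (hΔ : v + 2 * i = 2 * k + Δ) (hΔpos : 0 < Δ) :
    ∃ (A : {A : Finset (Fin v) // A.card = k}) (w : (genJohnsonGraph v k i).Walk A A),
      w.length = 2 * ((k - i) ⌈/⌉ Δ) + 1 := by
  obtain ⟨A, B, hAB⟩ := genJohnsonGraph_exists_adj hik h2k
  have hceil : k - i ≤ Δ * ((k - i) ⌈/⌉ Δ) := le_smul_ceilDiv hΔpos
  obtain ⟨w, hw⟩ := genJohnsonGraph_exists_walk_length_eq hik h2i h2k hΔ ((k - i) ⌈/⌉ Δ) B A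
    (by rw [inter_comm, hAB.2, mul_comm]; omega)
  exact ⟨A, .cons hAB w, by simp [hw]⟩

theorem genJohnsonGraph_walk_card_inter_bounds (hΔ : v + 2 * i = 2 * k + Δ)
    {A C : {A : Finset (Fin v) // A.card = k}} (w : (genJohnsonGraph v k i).Walk A C) :
    (∀ j, w.length = 2 * j → k ≤ #(A.1 ∩ C.1) + j * Δ) ∧
      (∀ j, w.length = 2 * j + 1 → #(A.1 ∩ C.1) ≤ i + j * Δ) := by
  induction w with
  | @nil A =>
    refine ⟨fun j _ ↦ ?_, fun j hj ↦ by simp at hj⟩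
    rw [inter_self, A.2]
    omega
  | @cons A B C hAB p ih =>
    have hAB' : #(A.1 ∩ B.1) = i := hAB.2
    refine ⟨fun j hj ↦ ?_, fun j hj ↦ ?_⟩
    · obtain ⟨j, rfl⟩ : ∃ j', j = j' + 1 := ⟨j - 1, by simp at hj; omega⟩
      have hBC := ih.2 j (by simp at hj; omega)
      have hABC := card_add_card_add_card_le A.1 B.1 C.1
      rw [Fintype.card_fin, A.2, B.2, C.2] at hABC
      rw [Nat.succ_mul]
      omega
    · have hBC := ih.1 j (by simp at hj; omega)
      have hABC := card_inter_add_card_inter_le A.1 B.1 C.1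
      rw [C.2] at hABC
      omega

theorem genJohnsonGraph_le_length_of_odd (hΔ : v + 2 * i = 2 * k + Δ) (hΔpos : 0 < Δ)
    {A : {A : Finset (Fin v) // A.card = k}} (w : (genJohnsonGraph v k i).Walk A A)
    (hw : Odd w.length) :
    2 * ((k - i) ⌈/⌉ Δ) + 1 ≤ w.length := by
  obtain ⟨j, hj⟩ := hw
  have hA := (genJohnsonGraph_walk_card_inter_bounds hΔ w).2 j hj
  rw [inter_self, A.2] at hA
  have hj : (k - i) ⌈/⌉ Δ ≤ j :=
    (ceilDiv_le_iff_le_smul hΔpos).2 (by rw [smul_eq_mul, mul_comm]; omega)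
  omega

end Johnson

theorem odd_girth_girth_four_general (v k i : ℕ) (hik : i < k)
    (h2k : 2 * k ≤ v) (hexc : ¬(v = 2 * k ∧ i = 0))
    (hg : (genJohnsonGraph v k i).girth = 4) :
    (∃ (A : {A : Finset (Fin v) // A.card = k})
      (c : (genJohnsonGraph v k i).Walk A A),
        c.IsCycle ∧ c.length = 2 * ((k - i) ⌈/⌉ (v - 2 * k + 2 * i)) + 1) ∧
    (∀ (A : {A : Finset (Fin v) // A.card = k})
      (c : (genJohnsonGraph v k i).Walk A A),
        c.IsCycle → Odd c.length →
          2 * ((k - i) ⌈/⌉ (v - 2 * k + 2 * i)) + 1 ≤ c.length) := by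
  set Δ := v - 2 * k + 2 * i
  have hΔ : v + 2 * i = 2 * k + Δ := by omega
  have hΔpos : 0 < Δ := by omega
  have h2i : 2 * i ≤ k := by
    by_contra! hki
    have := genJohnsonGraph_girth_le_three hik h2k hki
    omega
  refine ⟨?_, fun A c _ hc ↦ genJohnsonGraph_le_length_of_odd hΔ hΔpos c hc⟩
  obtain ⟨A, w, hw⟩ := genJohnsonGraph_exists_closed_walk_length_eq hik h2i h2k hΔ hΔpos
  obtain ⟨B, c, hc, hco, hcw⟩ := w.exists_isCycle_odd_length_le (hw ▸ odd_two_mul_add_one _)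
  exact ⟨B, c, hc, le_antisymm (hw ▸ hcw) (genJohnsonGraph_le_length_of_odd hΔ hΔpos c hco)⟩

/-- If `J(v,k,i)` has girth 4, then its odd girth equals `2⌈(k-i)/Δ⌉ + 1`:
there is an odd cycle of that length and no shorter odd cycle. -/
theorem odd_girth_girth_four (v k i : ℕ) (hik : i < k) (hkv : k < v)
    (h2k : 2 * k ≤ v) (hexc : ¬(v = 2 * k ∧ i = 0))
    (hg : (genJohnsonGraph v k i).girth = 4) :
    (∃ (A : {A : Finset (Fin v) // A.card = k})
      (c : (genJohnsonGraph v k i).Walk A A),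
        c.IsCycle ∧ c.length = 2 * ((k - i) ⌈/⌉ (v - 2 * k + 2 * i)) + 1) ∧
    (∀ (A : {A : Finset (Fin v) // A.card = k})
      (c : (genJohnsonGraph v k i).Walk A A),
        c.IsCycle → Odd c.length →
          2 * ((k - i) ⌈/⌉ (v - 2 * k + 2 * i)) + 1 ≤ c.length) :=
  odd_girth_girth_four_general v k i hik h2k hexc hg
end

section
/- The odd girth of X = J(v,k,i) equals 2⌈(k − i)/Δ⌉ + 1; that is, X contains an odd cycle of length 2⌈(k − i)/Δ⌉ + 1 and contains no shorter odd cycle. -/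
open Finset

namespace SimpleGraph.Walk

variable {V : Type*} {G : SimpleGraph V}

theorem exists_isPath_even_add_or_odd_isCycle [DecidableEq V] {u v : V} (p : G.Walk u v) :
    (∃ q : G.Walk u v, q.IsPath ∧ q.length ≤ p.length ∧ Even (q.length + p.length)) ∨
      ∃ (x : V) (c : G.Walk x x), c.IsCycle ∧ Odd c.length ∧ c.length ≤ p.length := by
  induction p with
  | nil => exact .inl ⟨nil, .nil, le_rfl, by simp⟩
  | @cons a b w hab p ih =>
    rcases ih with ⟨q, hq, hle, hpar⟩ | ⟨x, c, hc, hodd, hle⟩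
    · by_cases ha : a ∈ q.support
      · -- split `q` where it revisits `a`: either the loop `a → b ⇝ a` is odd,
        -- or the rest of `q` is a path of the right parity
        have hsplit := congrArg length (q.take_spec ha)
        rw [length_append] at hsplit
        rcases Nat.even_or_odd (q.takeUntil a ha).length with heven | hodd
        · have hpos : (q.takeUntil a ha).length ≠ 0 :=
            fun h0 => hab.ne (eq_of_length_eq_zero h0).symm
          refine .inr ⟨a, cons hab (q.takeUntil a ha), ?_, by simpa [Nat.odd_add_one], ?_⟩
          · refine isCycle_iff_isPath_tail_and_le_length.2 ⟨?_, ?_⟩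
            · simpa using hq.takeUntil ha
            · obtain ⟨r, hr⟩ := heven
              simp only [length_cons]
              omega
          · simp only [length_cons]
            omega
        · refine .inl ⟨q.dropUntil a ha, hq.dropUntil ha,
            by simp only [length_cons]; omega, ?_⟩
          obtain ⟨r, hr⟩ := hodd
          obtain ⟨s, hs⟩ := hpar
          exact ⟨s - r, by simp only [length_cons]; omega⟩
      · refine .inl ⟨cons hab q, hq.cons ha, by simpa using hle, ?_⟩
        obtain ⟨s, hs⟩ := hpar
        exact ⟨s + 1, by simp only [length_cons]; omega⟩
    · exact .inr ⟨x, c, hc, hodd, by simp only [length_cons]; omega⟩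

theorem exists_odd_isCycle_of_odd_length {u : V} (p : G.Walk u u) (hp : Odd p.length) :
    ∃ (x : V) (c : G.Walk x x), c.IsCycle ∧ Odd c.length ∧ c.length ≤ p.length := by
  classical
  refine p.exists_isPath_even_add_or_odd_isCycle.resolve_left ?_
  rintro ⟨q, hq, -, hpar⟩
  rw [(isPath_iff_nil.1 hq).length_eq_zero, zero_add] at hpar
  exact Nat.not_even_iff_odd.2 hp hpar

end SimpleGraph.Walk

section Venn

variable {α : Type*} [DecidableEq α]

theorem Finset.card_inter_add_card_inter_le_s19 (X Y Z : Finset α) :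
    #(X ∩ Y) + #(X ∩ Z) ≤ #X + #(Y ∩ Z) := by
  rw [← card_union_add_card_inter]
  exact add_le_add (card_le_card (union_subset inter_subset_left inter_subset_left))
    (card_le_card (inter_subset_inter inter_subset_right inter_subset_right))

theorem Finset.card_add_card_add_card_le_s19 [Fintype α] (X Y Z : Finset α) :
    #X + #Y + #Z ≤ Fintype.card α + #(X ∩ Y) + #(X ∩ Z) + #(Y ∩ Z) := by
  have hXY := card_union_add_card_inter X Y
  have hXYZ := card_union_add_card_inter (X ∪ Y) Z
  have hcap : #((X ∪ Y) ∩ Z) ≤ #(X ∩ Z) + #(Y ∩ Z) := by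
    rw [union_inter_distrib_right]
    exact card_union_le _ _
  have huniv := card_le_univ (X ∪ Y ∪ Z)
  omega

theorem Finset.exists_card_inter_eq_card_inter_eq_s19 [Fintype α] (X Y : Finset α) {a b c : ℕ}
    (ha : a ≤ #(X ∩ Y)) (hb₁ : b ≤ #(X \ Y)) (hb₂ : b ≤ #(Y \ X)) (hc : c ≤ #(X ∪ Y)ᶜ) :
    ∃ B : Finset α, #B = a + b + b + c ∧ #(B ∩ X) = a + b ∧ #(B ∩ Y) = a + b := by
  obtain ⟨S₁, hS₁, rfl⟩ := exists_subset_card_eq ha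
  obtain ⟨S₂, hS₂, rfl⟩ := exists_subset_card_eq hb₁
  obtain ⟨S₃, hS₃, hS₃b⟩ := exists_subset_card_eq hb₂
  obtain ⟨S₄, hS₄, rfl⟩ := exists_subset_card_eq hc
  have key : ∀ x, (x ∈ S₁ → x ∈ X ∧ x ∈ Y) ∧ (x ∈ S₂ → x ∈ X ∧ x ∉ Y) ∧
      (x ∈ S₃ → x ∈ Y ∧ x ∉ X) ∧ (x ∈ S₄ → x ∉ X ∧ x ∉ Y) := fun x =>
    ⟨fun h => mem_inter.1 (hS₁ h), fun h => mem_sdiff.1 (hS₂ h), fun h => mem_sdiff.1 (hS₃ h),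
      fun h => by simpa [not_or] using hS₄ h⟩
  set B := S₁ ∪ S₂ ∪ S₃ ∪ S₄
  have hBX : B ∩ X = S₁ ∪ S₂ := by
    ext x; have := key x; simp only [B, mem_inter, mem_union]; tauto
  have hBY : B ∩ Y = S₁ ∪ S₃ := by
    ext x; have := key x; simp only [B, mem_inter, mem_union]; tauto
  have hBX' : B \ X = S₃ ∪ S₄ := by
    ext x; have := key x; simp only [B, mem_sdiff, mem_union]; tauto
  have h₁₂ : Disjoint S₁ S₂ := disjoint_left.2 fun x h₁ h₂ => by have := key x; tauto
  have h₁₃ : Disjoint S₁ S₃ := disjoint_left.2 fun x h₁ h₃ => by have := key x; tauto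
  have h₃₄ : Disjoint S₃ S₄ := disjoint_left.2 fun x h₃ h₄ => by have := key x; tauto
  refine ⟨B, ?_, ?_, ?_⟩
  · rw [← card_inter_add_card_sdiff B X, hBX, hBX', card_union_of_disjoint h₁₂,
      card_union_of_disjoint h₃₄, hS₃b]
    ring
  · rw [hBX, card_union_of_disjoint h₁₂]
  · rw [hBY, card_union_of_disjoint h₁₃, hS₃b]

end Venn

section CircleArc

variable {v : ℕ} [NeZero v]

def circleArc (v : ℕ) [NeZero v] (k a : ℕ) : Finset (Fin v) :=
  (range k).image fun t => Fin.ofNat v (a + t)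

theorem circleArc_add_mul (k a m : ℕ) : circleArc v k (a + m * v) = circleArc v k a := by
  unfold circleArc
  congr 1
  funext t
  ext
  simp only [Fin.val_ofNat, add_right_comm a, Nat.add_mul_mod_self_right]

theorem card_circleArc {k : ℕ} (hk : k ≤ v) (a : ℕ) : #(circleArc v k a) = k := by
  rw [circleArc, card_image_of_injOn, card_range]
  intro s hs t ht hst
  have hmod : (a + s) % v = (a + t) % v := by simpa [Fin.ext_iff, Fin.val_ofNat] using hst
  simp only [coe_range, Set.mem_Iio] at hs ht
  have := Nat.ModEq.add_left_cancel' a hmod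
  rwa [Nat.ModEq, Nat.mod_eq_of_lt (by omega), Nat.mod_eq_of_lt (by omega)] at this

theorem circleArc_union_circleArc_add {k σ : ℕ} (hσ : σ ≤ k) (a : ℕ) :
    circleArc v k a ∪ circleArc v k (a + σ) = circleArc v (σ + k) a := by
  ext x
  simp only [circleArc, mem_union, mem_image, mem_range]
  constructor
  · rintro (⟨t, ht, rfl⟩ | ⟨t, ht, rfl⟩)
    · exact ⟨t, by omega, rfl⟩
    · exact ⟨σ + t, by omega, by rw [add_assoc]⟩
  · rintro ⟨t, ht, rfl⟩
    by_cases htk : t < k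
    · exact .inl ⟨t, htk, rfl⟩
    · exact .inr ⟨t - σ, by omega, by rw [add_assoc, Nat.add_sub_cancel' (by omega)]⟩

theorem card_circleArc_inter_circleArc_add {k σ : ℕ} (hσ : σ ≤ k) (hσk : σ + k ≤ v)
    (a : ℕ) :
    #(circleArc v k a ∩ circleArc v k (a + σ)) = k - σ := by
  have := card_union_add_card_inter (circleArc v k a) (circleArc v k (a + σ))
  rw [circleArc_union_circleArc_add hσ, card_circleArc hσk, card_circleArc (by omega),
    card_circleArc (by omega)] at this
  omega

end CircleArc

namespace genJohnsonGraph

open SimpleGraph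

variable {v k i : ℕ}

theorem adj_of_card_inter_eq (hik : i ≠ k) {A B : {A : Finset (Fin v) // #A = k}}
    (h : #(A.1 ∩ B.1) = i) : (genJohnsonGraph v k i).Adj A B := by
  refine ⟨fun hAB => hik ?_, h⟩
  rw [hAB, inter_self, B.2] at h
  exact h.symm

theorem card_inter_le_card_inter_add_of_adj_of_adj (X : Finset (Fin v))
    {Y Z W : {A : Finset (Fin v) // #A = k}} (hYZ : (genJohnsonGraph v k i).Adj Y Z)
    (hZW : (genJohnsonGraph v k i).Adj Z W) :
    #(X ∩ Y.1) ≤ #(X ∩ W.1) + (v - 2 * k + 2 * i) := by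
  have hXYZ := card_inter_add_card_inter_le_s19 X Y.1 Z.1
  have hXZW := card_add_card_add_card_le_s19 X Z.1 W.1
  rw [Fintype.card_fin, Z.2, W.2, hZW.2] at hXZW
  rw [hYZ.2] at hXYZ
  omega

theorem card_inter_le_card_inter_getVert_add (X : Finset (Fin v))
    {Y W : {A : Finset (Fin v) // #A = k}} (c : (genJohnsonGraph v k i).Walk Y W) :
    ∀ t, 2 * t ≤ c.length →
      #(X ∩ Y.1) ≤ #(X ∩ (c.getVert (2 * t)).1) + t * (v - 2 * k + 2 * i)
  | 0, _ => by simp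
  | t + 1, ht => by
    have ih := card_inter_le_card_inter_getVert_add X c t (by omega)
    have hstep := card_inter_le_card_inter_add_of_adj_of_adj X
      (c.adj_getVert_succ (i := 2 * t) (by omega))
      (c.adj_getVert_succ (i := 2 * t + 1) (by omega))
    rw [show 2 * (t + 1) = 2 * t + 1 + 1 by ring, add_one_mul]
    omega

theorem two_mul_ceilDiv_add_one_le_length {A : {A : Finset (Fin v) // #A = k}}
    (c : (genJohnsonGraph v k i).Walk A A) (hc : Odd c.length) :
    2 * ((k - i) ⌈/⌉ (v - 2 * k + 2 * i)) + 1 ≤ c.length := by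
  obtain ⟨t, ht⟩ := hc
  have hbound := card_inter_le_card_inter_getVert_add A.1 c t (by omega)
  have hlast := c.adj_getVert_succ (i := 2 * t) (by omega)
  rw [show 2 * t + 1 = c.length by omega, c.getVert_length] at hlast
  rw [inter_self, A.2, inter_comm, hlast.2] at hbound
  rcases Nat.eq_zero_or_pos (v - 2 * k + 2 * i) with hΔ | hΔ
  · rw [hΔ, ceilDiv_zero]
    omega
  · have := (ceilDiv_le_iff_le_mul hΔ).2 (show k - i ≤ (v - 2 * k + 2 * i) * t by
      rw [mul_comm]; omega)
    omega

theorem exists_adj_adj_of_le_card_inter (hik : i < k) (h2k : 2 * k ≤ v)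
    {X Y : {A : Finset (Fin v) // #A = k}} (hiXY : i ≤ #(X.1 ∩ Y.1))
    (hXY : k ≤ #(X.1 ∩ Y.1) + (v - 2 * k + 2 * i)) :
    ∃ B, (genJohnsonGraph v k i).Adj X B ∧ (genJohnsonGraph v k i).Adj B Y := by
  have hXY' := card_inter_add_card_sdiff X.1 Y.1
  have hYX' := card_inter_add_card_sdiff Y.1 X.1
  have hcompl := card_compl (X.1 ∪ Y.1)
  have hunion := card_union_add_card_inter X.1 Y.1
  rw [inter_comm, Y.2] at hYX'
  rw [X.2] at hXY'
  rw [X.2, Y.2] at hunion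
  rw [Fintype.card_fin] at hcompl
  -- `B` takes `min i #(X \ Y)` elements from each of `X \ Y` and `Y \ X`
  obtain ⟨B, hB, hBX, hBY⟩ := exists_card_inter_eq_card_inter_eq_s19 X.1 Y.1
    (a := i - min i #(X.1 \ Y.1)) (b := min i #(X.1 \ Y.1)) (c := k - i - min i #(X.1 \ Y.1))
    (by omega) (by omega) (by omega) (by omega)
  refine ⟨⟨B, by omega⟩, adj_of_card_inter_eq hik.ne ?_, adj_of_card_inter_eq hik.ne ?_⟩
  · rw [inter_comm]; simp only; omega
  · simp only; omega

section CircleArc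

variable [NeZero v]

def arcVertex (hkv : k ≤ v) (a : ℕ) : {A : Finset (Fin v) // #A = k} :=
  ⟨circleArc v k a, card_circleArc hkv a⟩

theorem exists_walk_arcVertex (hik : i < k) (hv : 2 * k ≤ v + i) (hkv : k ≤ v) (j : ℕ) :
    ∃ w : (genJohnsonGraph v k i).Walk (arcVertex hkv 0) (arcVertex hkv (j * (k - i))),
      w.length = j := by
  induction j with
  | zero => exact ⟨Walk.nil.copy rfl (by rw [zero_mul]), by simp⟩
  | succ j ih =>
    obtain ⟨w, hw⟩ := ih
    have hadj : (genJohnsonGraph v k i).Adj (arcVertex hkv (j * (k - i)))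
        (arcVertex hkv ((j + 1) * (k - i))) := by
      refine adj_of_card_inter_eq hik.ne ?_
      rw [arcVertex, arcVertex, add_one_mul,
        card_circleArc_inter_circleArc_add (Nat.sub_le k i) (by omega)]
      omega
    exact ⟨w.concat hadj, by rw [Walk.length_concat, hw]⟩

end CircleArc

theorem exists_closed_walk_length (hik : i < k) (h2k : 2 * k ≤ v)
    (hΔ : 0 < v - 2 * k + 2 * i) :
    ∃ (A : {A : Finset (Fin v) // #A = k}) (w : (genJohnsonGraph v k i).Walk A A),
      w.length = 2 * ((k - i) ⌈/⌉ (v - 2 * k + 2 * i)) + 1 := by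
  have : NeZero v := ⟨by omega⟩
  have hkv : k ≤ v := by omega
  set d := k - i
  set Δ := v - 2 * k + 2 * i
  obtain ⟨m, hm⟩ : ∃ m, d ⌈/⌉ Δ = m + 1 := by
    refine Nat.exists_eq_add_one.2 (Nat.pos_of_ne_zero fun h => ?_)
    have := (ceilDiv_le_iff_le_mul hΔ).1 h.le
    omega
  have hmΔ : m * Δ < d := by
    by_contra! h
    have := (ceilDiv_le_iff_le_mul hΔ).2 (h.trans_eq (mul_comm m Δ))
    omega
  have hdΔ : d ≤ m * Δ + Δ := by
    have := (ceilDiv_le_iff_le_mul hΔ).1 hm.le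
    linarith
  -- the arcs `j * d` wind `m` times around the circle and stop `δ` past their start
  set δ := d - m * Δ
  have hwrap : (2 * m + 1) * d = δ + m * v := by
    have : m * v = 2 * (m * d) + m * Δ := by
      rw [show v = 2 * d + Δ by omega]; ring
    rw [this]; ring_nf; omega
  obtain ⟨w, hw⟩ := exists_walk_arcVertex hik (by omega) hkv (2 * m + 1)
  have hend : arcVertex hkv ((2 * m + 1) * d) = arcVertex hkv δ := by
    rw [hwrap]; exact Subtype.ext (circleArc_add_mul k δ m)
  have hinter : #((arcVertex hkv δ).1 ∩ (arcVertex hkv 0).1) = k - δ := by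
    rw [inter_comm, arcVertex, arcVertex]
    simpa using card_circleArc_inter_circleArc_add (k := k) (σ := δ) (by omega) (by omega) 0
  obtain ⟨B, hXB, hBY⟩ := exists_adj_adj_of_le_card_inter hik h2k
    (X := arcVertex hkv δ) (Y := arcVertex hkv 0) (by omega) (by omega)
  exact ⟨_, ((w.copy rfl hend).concat hXB).concat hBY, by simp [hw, hm]; ring⟩

end genJohnsonGraph

theorem odd_girth_formula_general (v k i : ℕ) (hik : i < k)
    (h2k : 2 * k ≤ v) (hexc : ¬(v = 2 * k ∧ i = 0)) :
    (∃ (A : {A : Finset (Fin v) // A.card = k})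
      (c : (genJohnsonGraph v k i).Walk A A),
        c.IsCycle ∧ c.length = 2 * ((k - i) ⌈/⌉ (v - 2 * k + 2 * i)) + 1) ∧
    (∀ (A : {A : Finset (Fin v) // A.card = k})
      (c : (genJohnsonGraph v k i).Walk A A),
        c.IsCycle → Odd c.length →
          2 * ((k - i) ⌈/⌉ (v - 2 * k + 2 * i)) + 1 ≤ c.length) := by
  refine ⟨?_, fun A c _ hodd => genJohnsonGraph.two_mul_ceilDiv_add_one_le_length c hodd⟩
  obtain ⟨A, w, hw⟩ := genJohnsonGraph.exists_closed_walk_length hik h2k (by omega)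
  obtain ⟨x, c, hc, hodd, hle⟩ :=
    w.exists_odd_isCycle_of_odd_length (hw ▸ odd_two_mul_add_one _)
  exact ⟨x, c, hc, le_antisymm (hw ▸ hle)
    (genJohnsonGraph.two_mul_ceilDiv_add_one_le_length c hodd)⟩

/-- The odd girth of `J(v,k,i)` equals `2⌈(k-i)/Δ⌉ + 1`:
there is an odd cycle of that length and no shorter odd cycle. -/
theorem odd_girth_formula (v k i : ℕ) (hik : i < k) (hkv : k < v)
    (h2k : 2 * k ≤ v) (hexc : ¬(v = 2 * k ∧ i = 0)) :
    (∃ (A : {A : Finset (Fin v) // A.card = k})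
      (c : (genJohnsonGraph v k i).Walk A A),
        c.IsCycle ∧ c.length = 2 * ((k - i) ⌈/⌉ (v - 2 * k + 2 * i)) + 1) ∧
    (∀ (A : {A : Finset (Fin v) // A.card = k})
      (c : (genJohnsonGraph v k i).Walk A A),
        c.IsCycle → Odd c.length →
          2 * ((k - i) ⌈/⌉ (v - 2 * k + 2 * i)) + 1 ≤ c.length) :=
  odd_girth_formula_general v k i hik h2k hexc
end
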